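/- Let p be prime and G a subgroup of the multiplicative group (ℤ/pℤ)*. Define S(t,G) = Σ_{g∈G} e_p(tg) and S(G) = max_{t ≢ 0 (mod p)} |S(t,G)|. Then for the number A(P_1,...,P_s) of solutions of a_1 m_1 + ... + a_s m_s ≡ 0 (mod p) with a_i ∈ G and 1 ≤ m_i ≤ P_i, summed over all choices of (a_1,...,a_s) ∈ G^s, one has A(P_1,...,P_s) ≤ (#G^s / p) · P_1···P_s + S(G)^{s-2} · #G · P_1···P_s. -/

import Mathlib

open Complex Finset
open scoped Classical

/-!
Detecting `∑ aᵢ mᵢ ≡ 0` with additive characters gives `p · A = ∑ₙ ∏ᵢ Tᵢ(n)`, where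
`Tᵢ(n) = ∑_{a ∈ G} ∑_{m ≤ Pᵢ} e_p(n a m) = ∑_{m ≤ Pᵢ} S(n m)`. The frequency `n = 0` gives the
main term `#G^s ∏ Pᵢ`. For `n ≠ 0` all the `n m` are nonzero when `Pᵢ < p`, so `|Tᵢ(n)| ≤ S(G) Pᵢ`,
which bounds `s - 2` of the factors; the other two are handled by Cauchy–Schwarz and Parseval,
`∑ₙ |Tᵢ(n)|² = p · #{a m = a' m'} ≤ p #G Pᵢ²`, because `a m` and `m` determine `a`.
If some `Pᵢ = p`, then `Tᵢ(n) = 0` for `n ≠ 0` and the error term vanishes.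
-/

lemma AddChar.map_sum_eq_prod {ι A M : Type*} [AddCommMonoid A] [CommMonoid M]
    (ψ : AddChar A M) (s : Finset ι) (f : ι → A) : ψ (∑ i ∈ s, f i) = ∏ i ∈ s, ψ (f i) := by
  induction s using Finset.cons_induction with
  | empty => simp
  | cons a s ha ih => rw [sum_cons, prod_cons, AddChar.map_add_eq_mul, ih]

lemma sum_prod_le_of_le_of_sum_sq_le {ι : Type*} {k : ℕ} (N : Finset ι)
    (a : Fin (k + 2) → ι → ℝ) (m : Fin (k + 2) → ℝ) {σ c : ℝ} (hσ : 0 ≤ σ) (hc : 0 ≤ c)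
    (hm : ∀ i, 0 ≤ m i) (ha : ∀ i, ∀ n ∈ N, 0 ≤ a i n) (haσ : ∀ i, ∀ n ∈ N, a i n ≤ σ * m i)
    (ha2 : ∀ i, ∑ n ∈ N, a i n ^ 2 ≤ c * m i ^ 2) :
    ∑ n ∈ N, ∏ i, a i n ≤ σ ^ k * c * ∏ i, m i := by
  set R := ∏ j : Fin k, σ * m j.succ.succ
  have hsqrt : ∀ i, √(∑ n ∈ N, a i n ^ 2) ≤ √c * m i := fun i => by
    rw [← Real.sqrt_sq (hm i), ← Real.sqrt_mul hc]
    exact Real.sqrt_le_sqrt (ha2 i)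
  calc ∑ n ∈ N, ∏ i, a i n
      = ∑ n ∈ N, a 0 n * a 1 n * ∏ j : Fin k, a j.succ.succ n := by
        simp only [Fin.prod_univ_succ, mul_assoc]; rfl
    _ ≤ ∑ n ∈ N, a 0 n * a 1 n * R := by
        refine sum_le_sum fun n hn => mul_le_mul_of_nonneg_left ?_ ?_
        · exact prod_le_prod (fun j _ => ha _ n hn) (fun j _ => haσ _ n hn)
        · exact mul_nonneg (ha 0 n hn) (ha 1 n hn)
    _ = R * ∑ n ∈ N, a 0 n * a 1 n := by rw [mul_sum]; simp only [mul_comm]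
    _ ≤ R * ((√c * m 0) * (√c * m 1)) := by
        refine mul_le_mul_of_nonneg_left ?_ (prod_nonneg fun j _ => mul_nonneg hσ (hm _))
        exact (Real.sum_mul_le_sqrt_mul_sqrt N _ _).trans <| mul_le_mul (hsqrt 0) (hsqrt 1)
          (Real.sqrt_nonneg _) (mul_nonneg (Real.sqrt_nonneg _) (hm 0))
    _ = σ ^ k * c * ∏ i, m i := by
        simp only [R, prod_mul_distrib, prod_const, card_univ, Fintype.card_fin,
          Fin.prod_univ_succ (n := k + 1), Fin.prod_univ_succ (n := k), Fin.succ_zero_eq_one]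
        linear_combination (σ ^ k * ∏ j : Fin k, m j.succ.succ) * m 0 * m 1 * Real.mul_self_sqrt hc

lemma card_filter_apply_eq_apply_le_mul {α β : Type*} [DecidableEq β] (X : Finset α) (f : α → β)
    {K : ℕ} (hK : ∀ v, #{y ∈ X | f y = v} ≤ K) : #{xy ∈ X ×ˢ X | f xy.1 = f xy.2} ≤ #X * K := by
  calc #{xy ∈ X ×ˢ X | f xy.1 = f xy.2}
      = ∑ x ∈ X, #{y ∈ X | f y = f x} := by simp_rw [card_filter, sum_product, eq_comm]
    _ ≤ #X * K := by simpa using sum_le_card_nsmul X _ K fun x _ => hK (f x)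

lemma card_filter_units_mul_eq_le {F β : Type*} [Field F] [DecidableEq F] (U : Finset Fˣ)
    (M : Finset β) (g : β → F) (hg : ∀ m ∈ M, g m ≠ 0) (v : F) :
    #{x ∈ U ×ˢ M | (x.1 : F) * g x.2 = v} ≤ #M := by
  refine card_le_card_of_injOn Prod.snd (fun x hx => (mem_product.1 (mem_filter.1 hx).1).2) ?_
  intro x hx y hy hxy
  simp only [coe_filter, mem_product, Set.mem_ofPred_eq] at hx hy
  refine Prod.ext (Units.ext (mul_right_cancel₀ (hg _ hx.1.2) ?_)) hxy
  rw [hx.2, hxy, hy.2]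

namespace ZMod

lemma intCast_injOn_Icc (N : ℕ) : Set.InjOn (Int.cast : ℤ → ZMod N) ↑(Icc (1 : ℤ) N) := by
  intro a ha b hb hab
  simp only [coe_Icc, Set.mem_Icc] at ha hb
  have := Int.eq_zero_of_abs_lt_dvd ((intCast_eq_intCast_iff_dvd_sub a b N).1 hab)
    (abs_sub_lt_iff.2 ⟨by omega, by omega⟩)
  omega

lemma intCast_ne_zero_of_mem_Icc {N P : ℕ} (hP : P < N) {m : ℤ} (hm : m ∈ Icc 1 (P : ℤ)) :
    (m : ZMod N) ≠ 0 := by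
  rw [mem_Icc] at hm
  rw [Ne, intCast_zmod_eq_zero_iff_dvd]
  exact fun h => by have := Int.le_of_dvd (by omega) h; omega

section

variable {N : ℕ} [NeZero N] {ι κ α β : Type*}

lemma sum_stdAddChar_mul (b : ZMod N) :
    ∑ x, stdAddChar (x * b) = if b = 0 then (N : ℂ) else 0 := by
  rw [AddChar.sum_mulShift b (isPrimitive_stdAddChar N), ZMod.card]
  push_cast; rfl

/-- `expSum G Units.val t` is the paper's `S(t, G)`, and
`expSum (G ×ˢ Icc 1 P) (fun x => x.1 * x.2) n = ∑_{a ∈ G} ∑_{1 ≤ m ≤ P} e_p(n a m)`. -/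
noncomputable def expSum (X : Finset ι) (f : ι → ZMod N) (n : ZMod N) : ℂ :=
  ∑ x ∈ X, stdAddChar (n * f x)

lemma expSum_eq_sum_exp (X : Finset ι) (f : ι → ZMod N) (n : ZMod N) :
    expSum X f n = ∑ x ∈ X, exp (2 * Real.pi * I * ((n * f x).val : ℂ) / N) := by
  simp [expSum, stdAddChar_apply, toCircle_apply]

@[simp]
lemma expSum_zero (X : Finset ι) (f : ι → ZMod N) : expSum X f 0 = #X := by
  simp [expSum]

lemma natCast_mul_card_filter_sum_eq_zero [Fintype κ] [DecidableEq κ] (X : κ → Finset ι)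
    (f : κ → ι → ZMod N) :
    (N : ℂ) * #{x ∈ Fintype.piFinset X | ∑ k, f k (x k) = 0} =
      ∑ n, ∏ k, expSum (X k) (f k) n := by
  calc (N : ℂ) * #{x ∈ Fintype.piFinset X | ∑ k, f k (x k) = 0}
      = ∑ x ∈ Fintype.piFinset X, ∑ n, stdAddChar (n * ∑ k, f k (x k)) := by
        simp_rw [sum_stdAddChar_mul, sum_ite, sum_const_zero, add_zero, sum_const, nsmul_eq_mul,
          mul_comm]
    _ = ∑ n, ∏ k, expSum (X k) (f k) n := by
        simp_rw [expSum, prod_univ_sum, mul_sum, AddChar.map_sum_eq_prod]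
        exact sum_comm

lemma natCast_mul_card_filter_sum_eq_zero_le [Fintype κ] [DecidableEq κ] (X : κ → Finset ι)
    (f : κ → ι → ZMod N) :
    (N : ℝ) * #{x ∈ Fintype.piFinset X | ∑ k, f k (x k) = 0} ≤
      ∏ k, (#(X k) : ℝ) + ∑ n ∈ univ.erase 0, ∏ k, ‖expSum (X k) (f k) n‖ := by
  have h := natCast_mul_card_filter_sum_eq_zero X f
  rw [← add_sum_erase _ _ (mem_univ 0)] at h
  simp only [expSum_zero] at h
  calc (N : ℝ) * #{x ∈ Fintype.piFinset X | ∑ k, f k (x k) = 0}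
      = ((N : ℂ) * #{x ∈ Fintype.piFinset X | ∑ k, f k (x k) = 0}).re := by simp
    _ = ∏ k, (#(X k) : ℝ) + (∑ n ∈ univ.erase 0, ∏ k, expSum (X k) (f k) n).re := by
        rw [h, add_re]; norm_cast
    _ ≤ ∏ k, (#(X k) : ℝ) + ∑ n ∈ univ.erase 0, ∏ k, ‖expSum (X k) (f k) n‖ := by
        grw [re_le_norm, norm_sum_le]
        simp only [norm_prod, le_refl]

lemma sum_norm_expSum_sq (X : Finset ι) (f : ι → ZMod N) :
    ∑ n, ‖expSum X f n‖ ^ 2 = N * #{xy ∈ X ×ˢ X | f xy.1 = f xy.2} := by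
  have : ∑ n, (‖expSum X f n‖ : ℂ) ^ 2 = N * #{xy ∈ X ×ˢ X | f xy.1 = f xy.2} := by
    calc ∑ n, (‖expSum X f n‖ : ℂ) ^ 2
        = ∑ xy ∈ X ×ˢ X, ∑ n, stdAddChar (n * (f xy.1 - f xy.2)) := by
          simp_rw [← mul_conj', expSum, map_sum, ← AddChar.map_neg_eq_conj, sum_mul_sum,
            ← AddChar.map_add_eq_mul]
          rw [sum_product, sum_comm]
          simp_rw [mul_sub, sub_eq_add_neg]
          exact sum_congr rfl fun x _ => sum_comm
      _ = N * #{xy ∈ X ×ˢ X | f xy.1 = f xy.2} := by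
          simp_rw [sum_stdAddChar_mul, sub_eq_zero, sum_ite, sum_const_zero, add_zero, sum_const,
            nsmul_eq_mul, mul_comm]
  exact_mod_cast this

lemma expSum_product_eq_sum_fst (X : Finset α) (Y : Finset β) (f : α → ZMod N)
    (g : β → ZMod N) (n : ZMod N) :
    expSum (X ×ˢ Y) (fun x => f x.1 * g x.2) n = ∑ x ∈ X, expSum Y g (n * f x) := by
  simp only [expSum, sum_product, mul_assoc]

lemma expSum_product_eq_sum_snd (X : Finset α) (Y : Finset β) (f : α → ZMod N)
    (g : β → ZMod N) (n : ZMod N) :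
    expSum (X ×ˢ Y) (fun x => f x.1 * g x.2) n = ∑ y ∈ Y, expSum X f (n * g y) := by
  simp only [expSum, sum_product_right, mul_comm (g _), mul_assoc]

lemma expSum_Icc_intCast_eq_zero {c : ZMod N} (hc : c ≠ 0) :
    expSum (Icc (1 : ℤ) N) Int.cast c = 0 := by
  have himage : (Icc (1 : ℤ) N).image (Int.cast : ℤ → ZMod N) = univ :=
    eq_univ_of_card _ (by rw [card_image_of_injOn (intCast_injOn_Icc N), ZMod.card]; simp)
  rw [expSum, ← sum_image (f := fun t => stdAddChar (c * t)) (intCast_injOn_Icc N), himage]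
  simpa [mul_comm c, hc] using sum_stdAddChar_mul c

lemma expSum_units_product_Icc_eq_zero (U : Finset (ZMod N)ˣ) {n : ZMod N} (hn : n ≠ 0) :
    expSum (U ×ˢ Icc (1 : ℤ) N) (fun x => (x.1 : ZMod N) * (x.2 : ZMod N)) n = 0 := by
  rw [expSum_product_eq_sum_fst (f := Units.val) (g := Int.cast)]
  exact sum_eq_zero fun u _ => expSum_Icc_intCast_eq_zero (by simpa using hn)

end

section

variable {p : ℕ} [Fact p.Prime] {α β : Type*}

lemma norm_expSum_product_le {X : Finset α} {f : α → ZMod p} {σ : ℝ}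
    (hσ : ∀ t ≠ 0, ‖expSum X f t‖ ≤ σ) {M : Finset β} {g : β → ZMod p}
    (hg : ∀ m ∈ M, g m ≠ 0) {n : ZMod p} (hn : n ≠ 0) :
    ‖expSum (X ×ˢ M) (fun x => f x.1 * g x.2) n‖ ≤ σ * #M := by
  rw [expSum_product_eq_sum_snd, mul_comm]
  simpa using norm_sum_le_of_le M fun m hm => hσ _ (mul_ne_zero hn (hg m hm))

lemma sum_norm_expSum_units_product_sq_le (U : Finset (ZMod p)ˣ) {M : Finset β}
    {g : β → ZMod p} (hg : ∀ m ∈ M, g m ≠ 0) :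
    ∑ n, ‖expSum (U ×ˢ M) (fun x => (x.1 : ZMod p) * g x.2) n‖ ^ 2 ≤ p * #U * #M ^ 2 := by
  have := card_filter_apply_eq_apply_le_mul (U ×ˢ M) _ (card_filter_units_mul_eq_le U M g hg)
  rw [sum_norm_expSum_sq, card_product] at *
  calc _ ≤ (p : ℝ) * (#U * #M * #M) := by gcongr; exact_mod_cast this
    _ = _ := by ring

lemma sum_prod_norm_expSum_units_product_le {k : ℕ} (U : Finset (ZMod p)ˣ)
    (M : Fin (k + 2) → Finset β) {g : β → ZMod p} (hg : ∀ i, ∀ m ∈ M i, g m ≠ 0) {σ : ℝ}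
    (hσ0 : 0 ≤ σ) (hσ : ∀ t ≠ 0, ‖expSum U Units.val t‖ ≤ σ) :
    ∑ n ∈ univ.erase 0, ∏ i, ‖expSum (U ×ˢ M i) (fun x => (x.1 : ZMod p) * g x.2) n‖ ≤
      σ ^ k * (p * #U) * ∏ i, (#(M i) : ℝ) :=
  sum_prod_le_of_le_of_sum_sq_le _ _ _ hσ0 (by positivity) (fun _ => by positivity)
    (fun _ _ _ => norm_nonneg _)
    (fun i _ hn => norm_expSum_product_le hσ (hg i) (ne_of_mem_erase hn))
    fun i => (sum_le_sum_of_subset_of_nonneg (subset_univ _) fun _ _ _ => by positivity).trans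
      ((sum_norm_expSum_units_product_sq_le U (hg i)).trans_eq (by ring))

lemma sum_prod_norm_expSum_units_product_Icc_le {k : ℕ} (U : Finset (ZMod p)ˣ)
    {P : Fin (k + 2) → ℕ} (hP : ∀ i, P i ≤ p) {σ : ℝ} (hσ0 : 0 ≤ σ)
    (hσ : ∀ t ≠ 0, ‖expSum U Units.val t‖ ≤ σ) :
    ∑ n ∈ univ.erase 0, ∏ i,
      ‖expSum (U ×ˢ Icc 1 (P i : ℤ)) (fun x => (x.1 : ZMod p) * (x.2 : ZMod p)) n‖ ≤
        σ ^ k * (p * #U) * ∏ i, (P i : ℝ) := by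
  by_cases hdeg : ∃ i, P i = p
  · obtain ⟨i, hi⟩ := hdeg
    refine (sum_eq_zero fun n hn => prod_eq_zero (mem_univ i) ?_).trans_le (by positivity)
    simp [hi, expSum_units_product_Icc_eq_zero U (ne_of_mem_erase hn)]
  · push Not at hdeg
    simpa using sum_prod_norm_expSum_units_product_le U (fun i => Icc 1 (P i : ℤ))
      (fun i m hm => intCast_ne_zero_of_mem_Icc ((hP i).lt_of_ne (hdeg i)) hm) hσ0 hσ

end

end ZMod

open ZMod in
theorem korobov_count_CS_bound_general
    (p : ℕ) [Fact p.Prime]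
    (G : Subgroup (ZMod p)ˣ) (s : ℕ) (hs : 2 ≤ s)
    (P : Fin s → ℕ) (hP : ∀ i, 1 ≤ P i ∧ P i ≤ p)
    (S : ZMod p → ℂ)
    (hS : ∀ t : ZMod p, S t = ∑ g ∈ Finset.univ.filter (fun g : (ZMod p)ˣ => g ∈ G),
        Complex.exp (2 * Real.pi * Complex.I * ((t * (g : (ZMod p)ˣ) : ZMod p).val : ℂ) / p))
    (SG : ℝ)
    (hSG : IsGreatest {x : ℝ | ∃ t : ZMod p, t ≠ 0 ∧ x = ‖S t‖} SG)
    (A : ℕ)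
    (hA : A = Nat.card {am : (Fin s → (ZMod p)ˣ) × (Fin s → ℤ) //
        (∀ i, am.1 i ∈ G) ∧ (∀ i, 1 ≤ am.2 i ∧ am.2 i ≤ (P i : ℤ)) ∧
        (∑ i, (am.1 i : ZMod p) * (am.2 i : ZMod p)) = 0}) :
    (A : ℝ) ≤ ((Nat.card G : ℝ) ^ s / p) * ∏ i, (P i : ℝ) +
      SG ^ (s - 2) * (Nat.card G : ℝ) * ∏ i, (P i : ℝ) := by
  obtain ⟨k, rfl⟩ := Nat.exists_eq_add_of_le' hs
  set U : Finset (ZMod p)ˣ := univ.filter (· ∈ G)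
  have hcardG : Nat.card G = #U := by simp [U, Nat.card_eq_fintype_card, Fintype.card_subtype]
  have hA' : A = #{x ∈ Fintype.piFinset fun i => U ×ˢ Icc 1 (P i : ℤ) |
      ∑ i, ((x i).1 : ZMod p) * ((x i).2 : ZMod p) = 0} := by
    rw [hA, ← Nat.card_eq_finsetCard]
    refine Nat.card_congr (Equiv.subtypeEquiv (Equiv.arrowProdEquivProdArrow _ _ _).symm ?_)
    simp [U, Equiv.arrowProdEquivProdArrow, forall_and, and_assoc]
  obtain ⟨⟨t₀, -, hSG₀⟩, hSGmax⟩ := hSG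
  have hσ : ∀ t ≠ 0, ‖expSum U Units.val t‖ ≤ SG := fun t ht =>
    hSGmax ⟨t, ht, by rw [hS, expSum_eq_sum_exp]⟩
  have herror := sum_prod_norm_expSum_units_product_Icc_le U (fun i => (hP i).2)
    (hSG₀ ▸ norm_nonneg _) hσ
  have hmain := natCast_mul_card_filter_sum_eq_zero_le (fun i => U ×ˢ Icc 1 (P i : ℤ))
    fun _ x => (x.1 : ZMod p) * (x.2 : ZMod p)
  simp only [card_product, Int.card_Icc, add_sub_cancel_right, Int.toNat_natCast, Nat.cast_mul,
    prod_mul_distrib, prod_const, card_univ, Fintype.card_fin] at hmain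
  have hp : (0 : ℝ) < p := Nat.cast_pos.2 (Fact.out : p.Prime).pos
  rw [hA', hcardG, Nat.add_sub_cancel, div_mul_eq_mul_div, div_add' _ _ _ hp.ne', le_div_iff₀ hp]
  linarith

/-- Cauchy–Schwarz bound for the number of solutions of
`a₁m₁ + ⋯ + aₛmₛ ≡ 0 (mod p)` with `aᵢ ∈ G`, `1 ≤ mᵢ ≤ Pᵢ`:
`A ≤ (#G^s/p)·P₁⋯Pₛ + S(G)^{s-2}·#G·P₁⋯Pₛ`. -/
theorem korobov_count_CS_bound
    (p : ℕ) (hp : p.Prime) [Fact p.Prime]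
    (G : Subgroup (ZMod p)ˣ) (s : ℕ) (hs : 2 ≤ s)
    (P : Fin s → ℕ) (hP : ∀ i, 1 ≤ P i ∧ P i ≤ p)
    (S : ZMod p → ℂ)
    (hS : ∀ t : ZMod p, S t = ∑ g ∈ Finset.univ.filter (fun g : (ZMod p)ˣ => g ∈ G),
        Complex.exp (2 * Real.pi * Complex.I * ((t * (g : (ZMod p)ˣ) : ZMod p).val : ℂ) / p))
    (SG : ℝ)
    (hSG : IsGreatest {x : ℝ | ∃ t : ZMod p, t ≠ 0 ∧ x = ‖S t‖} SG)
    (A : ℕ)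
    (hA : A = Nat.card {am : (Fin s → (ZMod p)ˣ) × (Fin s → ℤ) //
        (∀ i, am.1 i ∈ G) ∧ (∀ i, 1 ≤ am.2 i ∧ am.2 i ≤ (P i : ℤ)) ∧
        (∑ i, (am.1 i : ZMod p) * (am.2 i : ZMod p)) = 0}) :
    (A : ℝ) ≤ ((Nat.card G : ℝ) ^ s / p) * ∏ i, (P i : ℝ) +
      SG ^ (s - 2) * (Nat.card G : ℝ) * ∏ i, (P i : ℝ) :=
  korobov_count_CS_bound_general p G s hs P hP S hS SG hSG A hA
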